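/- arXiv:2605.30681 — 2 statements merged into one kernel-verified Lean document; each statement's English description precedes it below -/
import Mathlib

section
/- Let Φ : [0,∞) → [0,∞) be a strictly increasing bijection of [0,∞) onto itself. Then the map x ↦ x + Φ(x) is a strictly increasing bijection of [0,∞) onto itself, and for every y ≥ 0 one has y − (id + Φ)^{−1}(y) = (id + Φ^{−1})^{−1}(y), where Φ^{−1}, (id + Φ)^{−1}, and (id + Φ^{−1})^{−1} denote the inverse functions on [0,∞). -/
open NNReal Function

theorem StrictMono.invFun_of_surjective {α β : Type*} [LinearOrder α] [Preorder β] [Nonempty α]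
    {f : α → β} (hf : StrictMono f) (hs : Surjective f) : StrictMono (invFun f) := fun a b hab =>
  hf.lt_iff_lt.mp (by rwa [rightInverse_invFun hs a, rightInverse_invFun hs b])

theorem Monotone.map_bot_of_surjective {α β : Type*} [Preorder α] [OrderBot α] [PartialOrder β]
    [OrderBot β] {f : α → β} (hf : Monotone f) (hs : Surjective f) : f ⊥ = ⊥ := by
  obtain ⟨a, ha⟩ := hs ⊥
  exact le_bot_iff.mp (ha ▸ hf bot_le)

theorem NNReal.surjective_id_add {f : ℝ≥0 → ℝ≥0} (hf : Continuous f) (h0 : f 0 = 0) :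
    Surjective fun x => x + f x := fun y => by
  obtain ⟨x, -, hx⟩ := intermediate_value_Icc (zero_le : 0 ≤ y) (continuous_id.add hf).continuousOn
    (show y ∈ Set.Icc (0 + f 0) (y + f y) from ⟨by simp [h0], le_self_add⟩)
  exact ⟨x, hx⟩

/-- `(id + Φ⁻¹) ∘ Φ = id + Φ`, so `(id + Φ⁻¹)⁻¹ y = Φ ((id + Φ)⁻¹ y)`. -/
theorem invFun_id_add_add_invFun_id_add_invFun {α : Type*} [AddCommMonoid α] [Nonempty α]
    {Φ : α → α} (hΦ : Injective Φ) (hg : Surjective fun x => x + Φ x)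
    (hh : Injective fun x => x + invFun Φ x) (y : α) :
    invFun (fun x => x + Φ x) y + invFun (fun x => x + invFun Φ x) y = y := by
  set a := invFun (fun x => x + Φ x) y
  have hay : a + Φ a = y := rightInverse_invFun hg y
  have hΦa : Φ a + invFun Φ (Φ a) = y := by rw [leftInverse_invFun hΦ a, add_comm, hay]
  have hinv : invFun (fun x => x + invFun Φ x) y = Φ a := by
    rw [← hΦa]
    exact leftInverse_invFun hh (Φ a)
  rw [hinv, hay]

theorem stmt_8 (Φ : ℝ≥0 → ℝ≥0) (hmono : StrictMono Φ) (hbij : Function.Bijective Φ) :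
    StrictMono (fun x => x + Φ x) ∧ Function.Bijective (fun x => x + Φ x) ∧
      ∀ y : ℝ≥0,
        y - Function.invFun (fun x => x + Φ x) y =
          Function.invFun (fun x : ℝ≥0 => x + Function.invFun Φ x) y := by
  have hg : StrictMono fun x => x + Φ x := strictMono_id.add hmono
  have hgsurj : Surjective fun x => x + Φ x :=
    NNReal.surjective_id_add (hmono.monotone.continuous_of_surjective hbij.2)
      (hmono.monotone.map_bot_of_surjective hbij.2)
  have hh : StrictMono fun x => x + invFun Φ x :=
    strictMono_id.add (hmono.invFun_of_surjective hbij.2)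
  refine ⟨hg, ⟨hg.injective, hgsurj⟩, fun y => tsub_eq_of_eq_add_rev ?_⟩
  exact (invFun_id_add_add_invFun_id_add_invFun hbij.1 hgsurj hh.injective y).symm
end

section
/- Let Φ : [0,∞) → [0,∞) be a continuous strictly increasing bijection of [0,∞) onto itself, and let G = (id + Φ)^{−1} denote the inverse of the map x ↦ x + Φ(x) on [0,∞). Let S : [0,∞) → [0,∞) be differentiable with S'(t) = −G(S(t)) for all t ≥ 0. Let (E_k)_{k∈ℕ} be a sequence of nonnegative real numbers such that E₀ ≤ S(0) and E_{k+1} + Φ^{−1}(E_{k+1}) ≤ E_k for all k ∈ ℕ. Then E_k ≤ S(k) for all k ∈ ℕ. -/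
theorem stmt_9 (Φ G Φinv : ℝ → ℝ) (S : ℝ → ℝ) (E : ℕ → ℝ)
    (hΦmono : StrictMonoOn Φ (Set.Ici 0))
    (hΦcont : ContinuousOn Φ (Set.Ici 0))
    (hΦbij : Set.BijOn Φ (Set.Ici 0) (Set.Ici 0))
    -- `G` is the inverse of `x ↦ x + Φ x` on `[0,∞)`
    (hG : ∀ y : ℝ, 0 ≤ y → 0 ≤ G y ∧ G y + Φ (G y) = y)
    -- `Φinv` is the inverse of `Φ` on `[0,∞)`
    (hΦinv : ∀ y : ℝ, 0 ≤ y → 0 ≤ Φinv y ∧ Φ (Φinv y) = y)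
    (hSnonneg : ∀ t : ℝ, 0 ≤ t → 0 ≤ S t)
    (hSderiv : ∀ t : ℝ, 0 ≤ t → HasDerivAt S (-(G (S t))) t)
    (hEnonneg : ∀ k : ℕ, 0 ≤ E k)
    (hE0 : E 0 ≤ S 0)
    (hrec : ∀ k : ℕ, E (k + 1) + Φinv (E (k + 1)) ≤ E k) :
    ∀ k : ℕ, E k ≤ S k := by
  -- G is monotone on [0,∞)
  have hGmono : ∀ y₁ y₂ : ℝ, 0 ≤ y₁ → y₁ ≤ y₂ → G y₁ ≤ G y₂ := by
    intro y₁ y₂ h1 h12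
    by_contra h
    push_neg at h
    have hG1 := hG y₁ h1
    have hG2 := hG y₂ (le_trans h1 h12)
    have : y₂ < y₁ := by
      calc y₂ = G y₂ + Φ (G y₂) := hG2.2.symm
        _ < G y₁ + Φ (G y₁) := by
            have := hΦmono (Set.mem_Ici.2 hG2.1) (Set.mem_Ici.2 hG1.1) h
            linarith
        _ = y₁ := hG1.2
    linarith
  -- S is antitone on [0,∞)
  have hSanti : AntitoneOn S (Set.Ici (0:ℝ)) := by
    apply antitoneOn_of_deriv_nonpos (convex_Ici 0)
    · intro x hx
      exact (hSderiv x hx).continuousAt.continuousWithinAt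
    · intro x hx
      rw [interior_Ici] at hx
      exact (hSderiv x hx.le).differentiableAt.differentiableWithinAt
    · intro x hx
      rw [interior_Ici] at hx
      rw [(hSderiv x (le_of_lt hx)).deriv]
      have := (hG (S x) (hSnonneg x (le_of_lt hx))).1
      linarith
  intro k
  induction k with
  | zero => simpa using hE0
  | succ k ih =>
    have hk0 : (0:ℝ) ≤ (k:ℝ) := Nat.cast_nonneg k
    have hk1 : (k:ℝ) < (k:ℝ) + 1 := by linarith
    -- MVT: S(k+1) = S(k) - G(S ξ) for some ξ ∈ (k, k+1)
    obtain ⟨ξ, hξ, hξeq⟩ := exists_hasDerivAt_eq_slope S (fun t => -(G (S t))) hk1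
      (fun t ht => (hSderiv t (le_trans hk0 ht.1)).continuousAt.continuousWithinAt)
      (fun t ht => hSderiv t (le_trans hk0 (le_of_lt ht.1)))
    have hξ0 : (0:ℝ) ≤ ξ := le_trans hk0 (le_of_lt hξ.1)
    have hSξ : S ξ ≤ S (k:ℝ) := hSanti (Set.mem_Ici.2 hk0) (Set.mem_Ici.2 hξ0) (le_of_lt hξ.1)
    have hGξ : G (S ξ) ≤ G (S (k:ℝ)) := hGmono _ _ (hSnonneg ξ hξ0) hSξ
    have hstep : S ((k:ℝ)) - G (S (k:ℝ)) ≤ S ((k:ℝ) + 1) := by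
      have : -(G (S ξ)) = S ((k:ℝ)+1) - S (k:ℝ) := by
        rw [hξeq]; ring
      linarith
    -- key inequality: E(k+1) ≤ S(k) - G(S(k))
    have hSk0 : 0 ≤ S (k:ℝ) := hSnonneg _ hk0
    have hGk := hG (S (k:ℝ)) hSk0
    have hkey : E (k+1) ≤ S (k:ℝ) - G (S (k:ℝ)) := by
      by_contra h
      push_neg at h
      set c := G (S (k:ℝ)) with hc
      have hΦc : Φ c = S (k:ℝ) - c := by linarith [hGk.2]
      have hinv := hΦinv (E (k+1)) (hEnonneg (k+1))
      set b := Φinv (E (k+1)) with hb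
      have hΦcb : Φ c < Φ b := by rw [hΦc, hinv.2]; linarith
      have hcb : c < b := by
        by_contra hcb
        push_neg at hcb
        have := hΦmono.le_iff_le (Set.mem_Ici.2 hinv.1) (Set.mem_Ici.2 hGk.1)
        linarith [this.2 hcb]
      have h1 : E (k+1) + b ≤ S (k:ℝ) := le_trans (hrec k) (le_trans ih (le_refl _))
      linarith [hGk.2]
    have : E (k+1) ≤ S ((k:ℝ)+1) := le_trans hkey hstep
    simpa [Nat.cast_succ] using this
end
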